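/- Let G be a connected finite undirected multigraph with s, t ∈ V(G), s ≠ t, let λ = λ_G(s,t), and let C_0, …, C_p and V_0, …, V_{p+1} be the canonical sequence of minimum (s,t)-cuts and the blocks of G. Then each block V_i induces a subgraph G[V_i] with at most λ connected components; for 1 ≤ i ≤ p, each connected component of G[V_i] is incident with some number c ≥ 1 of edges of C_{i−1} and with exactly c edges of C_i; moreover V_0 and V_{p+1} are connected, V_0 is incident with all λ edges of C_0, and V_{p+1} is incident with all λ edges of C_p. -/

import Mathlib

/-!
A finite undirected multigraph (parallel edges allowed, no loops) is modelled by a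
vertex type `V`, an edge type `E` (both finite) and an endpoint map `ends : E → Sym2 V`
such that no edge is a loop (`¬ (ends e).IsDiag`).
-/

namespace FlowAug

variable {V E : Type}

/-- Two vertices are adjacent in `G - X` if some edge outside `X` joins them. -/
def Adj (ends : E → Sym2 V) (X : Set E) (u v : V) : Prop :=
  ∃ e, e ∉ X ∧ ends e = s(u, v)

/-- Reachability in `G - X`. -/
def Reach (ends : E → Sym2 V) (X : Set E) : V → V → Prop :=
  Relation.ReflTransGen (Adj ends X)

/-- `R_S(X)` : the set of vertices reachable from the vertex set `S` in `G - X`. -/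
def RS (ends : E → Sym2 V) (X : Set E) (S : Set V) : Set V :=
  {v | ∃ u ∈ S, Reach ends X u v}

/-- `δ(S)` : the set of edges with exactly one endpoint in `S`. -/
def edgeBoundary (ends : E → Sym2 V) (S : Set V) : Set E :=
  {e | ∃ u v, ends e = s(u, v) ∧ u ∈ S ∧ v ∉ S}

/-- `X` is an `(S,T)`-cut. -/
def IsCut (ends : E → Sym2 V) (X : Set E) (S T : Set V) : Prop :=
  RS ends X S ∩ RS ends X T = ∅

/-- `X` is a minimal `(S,T)`-cut: no proper subset of `X` is an `(S,T)`-cut. -/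
def IsMinimalCut (ends : E → Sym2 V) (X : Set E) (S T : Set V) : Prop :=
  IsCut ends X S T ∧ ∀ Y : Set E, Y ⊂ X → ¬ IsCut ends Y S T

/-- `X` is an `(S,T)`-cut of minimum cardinality. -/
def IsMinimumCut (ends : E → Sym2 V) (X : Set E) (S T : Set V) : Prop :=
  IsCut ends X S T ∧ ∀ Y : Set E, IsCut ends Y S T → X.ncard ≤ Y.ncard

/-- `X` is an `(S,T)`-cut that is closest to `S`: every `(S,T)`-cut `X' ≠ X` with
`R_S(X') ⊆ R_S(X)` satisfies `|X'| > |X|`. -/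
def IsClosestCut (ends : E → Sym2 V) (X : Set E) (S T : Set V) : Prop :=
  IsCut ends X S T ∧
    ∀ X' : Set E, IsCut ends X' S T → X' ≠ X →
      RS ends X' S ⊆ RS ends X S → X.ncard < X'.ncard

/-- `λ_G(s,t)` : the minimum cardinality of an `(s,t)`-cut (equivalently, by Menger's
theorem, the maximum number of pairwise edge-disjoint `(s,t)`-paths). -/
noncomputable def lamCut (ends : E → Sym2 V) (s t : V) : ℕ :=
  sInf {n | ∃ X : Set E, IsCut ends X {s} {t} ∧ X.ncard = n}

/-- `Z_{s,t}` : the edges of `Z` with one endpoint in `R_s(Z)` and one in `R_t(Z)`. -/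
def Zst (ends : E → Sym2 V) (s t : V) (Z : Set E) : Set E :=
  {e | e ∈ Z ∧ ∃ u v, ends e = s(u, v) ∧ u ∈ RS ends Z {s} ∧ v ∈ RS ends Z {t}}

/-- `Z` is a special `(s,t)`-cut: `Z` is an `(s,t)`-cut and `Z_{s,t}` is an `(s,t)`-cut. -/
def IsSpecial (ends : E → Sym2 V) (s t : V) (Z : Set E) : Prop :=
  IsCut ends Z {s} {t} ∧ IsCut ends (Zst ends s t Z) {s} {t}

/-- `Z` is eligible for `(s,t)`: special, and every edge of `Z` has its endpoints in
different connected components of `G - Z`. -/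
def IsEligible (ends : E → Sym2 V) (s t : V) (Z : Set E) : Prop :=
  IsSpecial ends s t Z ∧ ∀ e ∈ Z, ∀ u v : V, ends e = s(u, v) → ¬ Reach ends Z u v

/-- `Z` is a star `(s,t)`-cut: an `(s,t)`-cut each of whose edges has exactly one
endpoint in `R_s(Z)`. -/
def IsStarCut (ends : E → Sym2 V) (s t : V) (Z : Set E) : Prop :=
  IsCut ends Z {s} {t} ∧
    ∀ e ∈ Z, ∃ u v : V, ends e = s(u, v) ∧ u ∈ RS ends Z {s} ∧ v ∉ RS ends Z {s}

/-- A path from `s` to `t` in the multigraph described by `ends`, given by its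
sequence of vertices and traversed edges. -/
structure MGPath (V E : Type) (ends : E → Sym2 V) (s t : V) where
  n : ℕ
  vert : Fin (n + 1) → V
  edge : Fin n → E
  vert_zero : vert 0 = s
  vert_last : vert (Fin.last n) = t
  ends_eq : ∀ i : Fin n, ends (edge i) = s(vert i.castSucc, vert i.succ)

/-- A family of paths is (pairwise) edge-disjoint: no edge is used twice, neither on
a single path nor on two different paths. -/
def EdgeDisjoint {ends : E → Sym2 V} {s t : V} {k : ℕ}
    (P : Fin k → MGPath V E ends s t) : Prop :=
  Function.Injective fun p : (Σ i : Fin k, Fin (P i).n) => (P p.1).edge p.2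

/-- `P` is a witnessing `(s,t)`-flow for `Z`: a family of `λ_G(s,t)` pairwise
edge-disjoint `(s,t)`-paths such that every edge of `Z_{s,t}` occurs on a path of `P`
and every path of `P` contains exactly one edge of `Z`. -/
def IsWitnessingFlow (ends : E → Sym2 V) (s t : V) (Z : Set E) {k : ℕ}
    (P : Fin k → MGPath V E ends s t) : Prop :=
  k = lamCut ends s t ∧ EdgeDisjoint P ∧
    (∀ e ∈ Zst ends s t Z, ∃ (i : Fin k) (j : Fin (P i).n), (P i).edge j = e) ∧
    ∀ i : Fin k, ∃! j : Fin (P i).n, (P i).edge j ∈ Z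

/-- The vertices occurring on the paths of a family `P`. -/
def pathVerts {ends : E → Sym2 V} {s t : V} {k : ℕ}
    (P : Fin k → MGPath V E ends s t) : Set V :=
  {v | ∃ (i : Fin k) (m : Fin ((P i).n + 1)), (P i).vert m = v}

/-- The edges occurring on the paths of a family `P`. -/
def pathEdges {ends : E → Sym2 V} {s t : V} {k : ℕ}
    (P : Fin k → MGPath V E ends s t) : Set E :=
  {e | ∃ (i : Fin k) (j : Fin (P i).n), (P i).edge j = e}

/-- The arcs obtained by orienting every edge of every path of `P` in the forward
direction (from `s` towards `t`). -/
def DirAdjOnFlow {ends : E → Sym2 V} {s t : V} {k : ℕ}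
    (P : Fin k → MGPath V E ends s t) (u v : V) : Prop :=
  ∃ (i : Fin k) (l : Fin (P i).n), (P i).vert l.castSucc = u ∧ (P i).vert l.succ = v

/-- `N[S]` : the closed neighborhood of `S`. -/
def closedNbhd (ends : E → Sym2 V) (S : Set V) : Set V :=
  S ∪ {v | ∃ u ∈ S, ∃ e : E, ends e = s(u, v)}

/-- `X` is the minimum `(s,t)`-cut closest to `s` among all minimum `(s,t)`-cuts
satisfying the property `P`. -/
def IsClosestMinCutAmong (ends : E → Sym2 V) (s t : V) (P : Set E → Prop)
    (X : Set E) : Prop :=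
  IsMinimumCut ends X {s} {t} ∧ P X ∧
    ∀ Y : Set E, IsMinimumCut ends Y {s} {t} → P Y → Y ≠ X →
      RS ends Y {s} ⊆ RS ends X {s} → X.ncard < Y.ncard

/-- `C 0, …, C p` is the canonical sequence of non-crossing minimum `(s,t)`-cuts:
`C 0` is the unique minimum `(s,t)`-cut closest to `s`; `C i` is the unique minimum
`(s,t)`-cut closest to `s` among all minimum `(s,t)`-cuts `X` with
`N[R_s(C (i-1))] ⊆ R_s(X)`; and `p` is the largest index for which such a cut exists. -/
def CanonSeq (ends : E → Sym2 V) (s t : V) (p : ℕ) (C : ℕ → Set E) : Prop :=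
  IsClosestMinCutAmong ends s t (fun _ => True) (C 0) ∧
    (∀ i : ℕ, 0 < i → i ≤ p →
      IsClosestMinCutAmong ends s t
        (fun X => closedNbhd ends (RS ends (C (i - 1)) {s}) ⊆ RS ends X {s}) (C i)) ∧
    ¬ ∃ X : Set E, IsMinimumCut ends X {s} {t} ∧
        closedNbhd ends (RS ends (C p) {s}) ⊆ RS ends X {s}

/-- The blocks `V_0, …, V_{p+1}` associated with the canonical sequence of cuts. -/
def blockOf (ends : E → Sym2 V) (s : V) (p : ℕ) (C : ℕ → Set E) (i : ℕ) : Set V :=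
  if i = 0 then RS ends (C 0) {s}
  else if i ≤ p then RS ends (C i) {s} \ RS ends (C (i - 1)) {s}
  else Set.univ \ RS ends (C p) {s}

/-- Adjacency inside the induced subgraph `G[B]`. -/
def AdjIn (ends : E → Sym2 V) (B : Set V) (u v : V) : Prop :=
  u ∈ B ∧ v ∈ B ∧ ∃ e : E, ends e = s(u, v)

/-- Reachability inside the induced subgraph `G[B]`. -/
def ReachIn (ends : E → Sym2 V) (B : Set V) : V → V → Prop :=
  Relation.ReflTransGen (AdjIn ends B)

/-- The induced subgraph `G[B]` is connected. -/
def ConnIn (ends : E → Sym2 V) (B : Set V) : Prop :=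
  ∀ u ∈ B, ∀ v ∈ B, ReachIn ends B u v

/-- The connected component of `u` in the induced subgraph `G[B]`. -/
def compIn (ends : E → Sym2 V) (B : Set V) (u : V) : Set V :=
  {v | v ∈ B ∧ ReachIn ends B u v}

/-- The set of connected components of the induced subgraph `G[B]`. -/
def componentsIn (ends : E → Sym2 V) (B : Set V) : Set (Set V) :=
  {K | ∃ u ∈ B, K = compIn ends B u}

/-- The union of the blocks `V_a, …, V_b`. -/
def unionBlocks (ends : E → Sym2 V) (s : V) (p : ℕ) (C : ℕ → Set E)
    (a b : ℕ) : Set V :=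
  ⋃ j ∈ Set.Icc a b, blockOf ends s p C j

/-- `st` encodes the decomposition of the blocks `V_0, …, V_{p+1}` into bundles
`W_0, …, W_{q+1}`: bundle `W_i` consists of the blocks `V_{st i}, …, V_{st (i+1) - 1}`.
`W_0 = V_0`, and each further bundle is greedily either a single connected block, or a
maximal union of contiguous blocks inducing a disconnected subgraph. -/
def IsBundleSeq (ends : E → Sym2 V) (s : V) (p : ℕ) (C : ℕ → Set E)
    (q : ℕ) (st : ℕ → ℕ) : Prop :=
  st 0 = 0 ∧ st 1 = 1 ∧ st (q + 2) = p + 2 ∧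
    (∀ i j : ℕ, i < j → j ≤ q + 2 → st i < st j) ∧
    ∀ i : ℕ, 1 ≤ i → i ≤ q + 1 →
      (st (i + 1) = st i + 1 ∧ ConnIn ends (blockOf ends s p C (st i))) ∨
      (¬ ConnIn ends (blockOf ends s p C (st i)) ∧
        ¬ ConnIn ends (unionBlocks ends s p C (st i) (st (i + 1) - 1)) ∧
        ∀ j : ℕ, st (i + 1) - 1 < j → j ≤ p + 1 →
          ConnIn ends (unionBlocks ends s p C (st i) j))

/-- The bundle `W_i`. -/
def bundleOf (ends : E → Sym2 V) (s : V) (p : ℕ) (C : ℕ → Set E) (st : ℕ → ℕ)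
    (i : ℕ) : Set V :=
  unionBlocks ends s p C (st i) (st (i + 1) - 1)

/-- `C'_i` : the cut (among `C_0, …, C_p`) separating bundle `W_i` from `W_{i+1}`. -/
def interCut (C : ℕ → Set E) (st : ℕ → ℕ) (i : ℕ) : Set E :=
  C (st (i + 1) - 1)

/-- A bundle `W` is unaffected by `Z` if `N[W]` is contained in a single connected
component of `G - Z`. -/
def Unaffected (ends : E → Sym2 V) (Z : Set E) (W : Set V) : Prop :=
  ∀ u ∈ closedNbhd ends W, ∀ v ∈ closedNbhd ends W, Reach ends Z u v

/-- The stretch `W_{a,b} = W_a ∪ ⋯ ∪ W_b` of bundles. -/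
def stretchSet (ends : E → Sym2 V) (s : V) (p : ℕ) (C : ℕ → Set E) (st : ℕ → ℕ)
    (a b : ℕ) : Set V :=
  ⋃ i ∈ Set.Icc a b, bundleOf ends s p C st i

/-- The left interface of a stretch starting at bundle `W_a`. -/
def leftInterface (ends : E → Sym2 V) (s : V) (p : ℕ) (C : ℕ → Set E) (st : ℕ → ℕ)
    (a : ℕ) : Set V :=
  if a = 0 then {s}
  else {v | v ∈ bundleOf ends s p C st a ∧ ∃ e ∈ interCut C st (a - 1), v ∈ ends e}

/-- The right interface of a stretch ending at bundle `W_b`. -/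
def rightInterface (ends : E → Sym2 V) (s t : V) (p : ℕ) (C : ℕ → Set E)
    (st : ℕ → ℕ) (q b : ℕ) : Set V :=
  if b = q + 1 then {t}
  else {v | v ∈ bundleOf ends s p C st b ∧ ∃ e ∈ interCut C st b, v ∈ ends e}

/-- `W_{a,b}` is a maximal stretch of bundles all affected by `Z`. -/
def MaxAffStretch (ends : E → Sym2 V) (s : V) (p : ℕ) (C : ℕ → Set E)
    (st : ℕ → ℕ) (q : ℕ) (Z : Set E) (a b : ℕ) : Prop :=
  a ≤ b ∧ b ≤ q + 1 ∧
    (∀ i : ℕ, a ≤ i → i ≤ b → ¬ Unaffected ends Z (bundleOf ends s p C st i)) ∧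
    (a = 0 ∨ Unaffected ends Z (bundleOf ends s p C st (a - 1))) ∧
    (b = q + 1 ∨ Unaffected ends Z (bundleOf ends s p C st (b + 1)))

/-- `W_{a,b}` is a maximal stretch of bundles affected by `Z` containing both a vertex
reachable from `s` and a vertex reachable from `t` in `G - Z`. -/
def StronglyAffStretch (ends : E → Sym2 V) (s t : V) (p : ℕ) (C : ℕ → Set E)
    (st : ℕ → ℕ) (q : ℕ) (Z : Set E) (a b : ℕ) : Prop :=
  MaxAffStretch ends s p C st q Z a b ∧
    (stretchSet ends s p C st a b ∩ RS ends Z {s}).Nonempty ∧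
    (stretchSet ends s p C st a b ∩ RS ends Z {t}).Nonempty

/-- Adjacency inside the induced subgraph `G[B]` avoiding the edge set `X`. -/
def AdjInX (ends : E → Sym2 V) (B : Set V) (X : Set E) (u v : V) : Prop :=
  u ∈ B ∧ v ∈ B ∧ ∃ e, e ∉ X ∧ ends e = s(u, v)

/-- Reachability inside `G[B] - X`. -/
def ReachInX (ends : E → Sym2 V) (B : Set V) (X : Set E) : V → V → Prop :=
  Relation.ReflTransGen (AdjInX ends B X)

/-- `X` is a star `(a,b)`-cut of the induced subgraph `H = G[B]`: in `H - X` no path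
connects `a` and `b`, and every edge of `X` has exactly one endpoint reachable from
`a` in `H - X`. -/
def IsStarCutIn (ends : E → Sym2 V) (B : Set V) (a b : V) (X : Set E) : Prop :=
  ¬ ReachInX ends B X a b ∧
    ∀ e ∈ X, ∃ u v : V, ends e = s(u, v) ∧
      ReachInX ends B X a u ∧ ¬ ReachInX ends B X a v

end FlowAug

/-!
A minimum cut `X` equals both `δ(R_s(X))` and `δ(R_t(X))`; in a connected graph this makes
`R_s(X)` and its complement `R_t(X)` connected, which settles `V_0` and `V_{p+1}`.
For a component `K` of a middle block `V_i = R_s(C_i) \ R_s(C_{i-1})`, let `a` and `b` count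
the edges of `C_{i-1}` and of `C_i` at `K`. Adding `K` to the `s`-side of `C_{i-1}`, or
removing it from the `s`-side of `C_i`, gives `(s,t)`-cuts with at most `λ - a + b` and
`λ - b + a` edges, so `a = b`; and `a + b ≥ 1` because `G` is connected. Since an edge of
`C_{i-1}` meets at most one component of `V_i`, there are at most `λ` of them.
-/

namespace FlowAug

variable {V E : Type} {ends : E → Sym2 V}

section Reachability

instance (B : Set V) : Std.Symm (ReachIn ends B) :=
  have : Std.Symm (AdjIn ends B) :=
    ⟨fun _ _ ⟨hu, hv, e, hends⟩ => ⟨hv, hu, e, hends.trans Sym2.eq_swap⟩⟩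
  Relation.ReflTransGen.stdSymm

lemma mem_RS_singleton {X : Set E} {s v : V} : v ∈ RS ends X {s} ↔ Reach ends X s v := by
  simp [RS]

lemma mem_RS_self (X : Set E) (s : V) : s ∈ RS ends X {s} :=
  mem_RS_singleton.2 .refl

lemma mem_RS_of_mem_of_ends_eq {X : Set E} {S : Set V} {u v : V} {e : E}
    (hu : u ∈ RS ends X S) (he : e ∉ X) (hends : ends e = s(u, v)) : v ∈ RS ends X S :=
  let ⟨a, ha, hau⟩ := hu
  ⟨a, ha, hau.tail ⟨e, he, hends⟩⟩

lemma edgeBoundary_compl (U : Set V) : edgeBoundary ends Uᶜ = edgeBoundary ends U := by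
  ext e
  constructor <;> rintro ⟨u, v, hends, hu, hv⟩ <;>
    exact ⟨v, u, hends.trans Sym2.eq_swap, by simpa using hv, by simpa using hu⟩

lemma edgeBoundary_RS_subset (X : Set E) (S : Set V) : edgeBoundary ends (RS ends X S) ⊆ X :=
  fun _ ⟨_, _, hends, hu, hv⟩ => by_contra fun he => hv (mem_RS_of_mem_of_ends_eq hu he hends)

lemma mem_iff_of_reach_edgeBoundary {U : Set V} {u v : V}
    (h : Reach ends (edgeBoundary ends U) u v) : u ∈ U ↔ v ∈ U := by
  induction h with
  | refl => rfl
  | tail _ hcb ih =>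
    obtain ⟨e, he, hends⟩ := hcb
    refine ih.trans ⟨fun hc => by_contra fun hb => he ⟨_, _, hends, hc, hb⟩,
      fun hb => by_contra fun hc => he ⟨_, _, hends.trans Sym2.eq_swap, hb, hc⟩⟩

lemma isCut_edgeBoundary {U : Set V} {s t : V} (hs : s ∈ U) (ht : t ∉ U) :
    IsCut ends (edgeBoundary ends U) {s} {t} := by
  refine Set.eq_empty_iff_forall_notMem.2 fun w ⟨hsw, htw⟩ => ht ?_
  rw [mem_RS_singleton] at hsw htw
  exact (mem_iff_of_reach_edgeBoundary htw).2 ((mem_iff_of_reach_edgeBoundary hsw).1 hs)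

lemma edgeBoundary_nonempty (hconn : ∀ u v : V, Reach ends ∅ u v) {U : Set V} {u v : V}
    (hu : u ∈ U) (hv : v ∉ U) : (edgeBoundary ends U).Nonempty := by
  rw [Set.nonempty_iff_ne_empty]
  intro hempty
  have huv := hconn u v
  rw [← hempty] at huv
  exact hv ((mem_iff_of_reach_edgeBoundary huv).1 hu)

lemma connIn_RS (X : Set E) (s : V) : ConnIn ends (RS ends X {s}) := by
  have hreach : ∀ w, Reach ends X s w → ReachIn ends (RS ends X {s}) s w := by
    intro w h
    induction h with
    | refl => exact .refl
    | @tail c b hsc hcb ih =>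
      obtain ⟨e, he, hends⟩ := hcb
      exact ih.tail
        ⟨mem_RS_singleton.2 hsc, mem_RS_singleton.2 (hsc.tail ⟨e, he, hends⟩), e, hends⟩
  intro u hu v hv
  exact (symm (hreach u (mem_RS_singleton.1 hu))).trans (hreach v (mem_RS_singleton.1 hv))

end Reachability

section Components

variable {B K K' : Set V}

lemma subset_of_mem_componentsIn (hK : K ∈ componentsIn ends B) : K ⊆ B := by
  obtain ⟨u, -, rfl⟩ := hK
  exact fun _ hv => hv.1

lemma nonempty_of_mem_componentsIn (hK : K ∈ componentsIn ends B) : K.Nonempty := by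
  obtain ⟨u, hu, rfl⟩ := hK
  exact ⟨u, hu, .refl⟩

lemma mem_of_mem_componentsIn_of_ends_eq (hK : K ∈ componentsIn ends B) {u v : V} {e : E}
    (hu : u ∈ K) (hv : v ∈ B) (hends : ends e = s(u, v)) : v ∈ K := by
  obtain ⟨w, -, rfl⟩ := hK
  exact ⟨hv, hu.2.tail ⟨hu.1, hv, e, hends⟩⟩

lemma eq_of_mem_componentsIn (hK : K ∈ componentsIn ends B) (hK' : K' ∈ componentsIn ends B)
    {v : V} (hv : v ∈ K) (hv' : v ∈ K') : K = K' := by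
  obtain ⟨u, -, rfl⟩ := hK
  obtain ⟨u', -, rfl⟩ := hK'
  ext w
  exact ⟨fun hw => ⟨hw.1, hv'.2.trans ((symm hv.2).trans hw.2)⟩,
    fun hw => ⟨hw.1, hv.2.trans ((symm hv'.2).trans hw.2)⟩⟩

lemma ncard_componentsIn_le_one (h : ConnIn ends B) : (componentsIn ends B).ncard ≤ 1 := by
  have hsub : componentsIn ends B ⊆ {B} := by
    rintro _ ⟨u, hu, rfl⟩
    exact Set.Subset.antisymm (fun _ hv => hv.1) fun v hv => ⟨hv, h u hu v hv⟩
  exact (Set.ncard_le_ncard hsub).trans (Set.ncard_singleton B).le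

end Components

def meetingEdges (ends : E → Sym2 V) (X : Set E) (K : Set V) : Set E :=
  {e | e ∈ X ∧ ∃ v ∈ K, v ∈ ends e}

section Uncrossing

variable {S T K : Set V} {X Y : Set E}

lemma notMem_meetingEdges_of_ends_eq {u v : V} {e : E} (hends : ends e = s(u, v)) (hu : u ∉ K)
    (hv : v ∉ K) : e ∉ meetingEdges ends X K := by
  rintro ⟨-, w, hw, hwe⟩
  rw [hends, Sym2.mem_iff] at hwe
  rcases hwe with rfl | rfl <;> contradiction

variable (hSX : edgeBoundary ends S ⊆ X) (hTY : edgeBoundary ends T ⊆ Y)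
  (hK : K ∈ componentsIn ends (T \ S))
include hSX hTY hK

lemma edgeBoundary_subset_meetingEdges_union :
    edgeBoundary ends K ⊆ meetingEdges ends X K ∪ meetingEdges ends Y K := by
  rintro e ⟨u, v, hends, hu, hv⟩
  have hue : u ∈ ends e := hends ▸ Sym2.mem_mk_left u v
  have huTS := subset_of_mem_componentsIn hK hu
  by_cases hvS : v ∈ S
  · exact Or.inl ⟨hSX ⟨v, u, hends.trans Sym2.eq_swap, hvS, huTS.2⟩, u, hu, hue⟩
  · have hvT : v ∉ T := fun hvT =>
      hv (mem_of_mem_componentsIn_of_ends_eq hK hu ⟨hvT, hvS⟩ hends)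
    exact Or.inr ⟨hTY ⟨u, v, hends, huTS.1, hvT⟩, u, hu, hue⟩

lemma edgeBoundary_union_subset :
    edgeBoundary ends (S ∪ K) ⊆ (X \ meetingEdges ends X K) ∪ meetingEdges ends Y K := by
  rintro e ⟨u, v, hends, hu | hu, hv⟩ <;> obtain ⟨hvS, hvK⟩ := not_or.1 hv
  · have huK : u ∉ K := fun huK => (subset_of_mem_componentsIn hK huK).2 hu
    exact Or.inl ⟨hSX ⟨u, v, hends, hu, hvS⟩, notMem_meetingEdges_of_ends_eq hends huK hvK⟩
  · have hvT : v ∉ T := fun hvT =>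
      hvK (mem_of_mem_componentsIn_of_ends_eq hK hu ⟨hvT, hvS⟩ hends)
    exact Or.inr ⟨hTY ⟨u, v, hends, (subset_of_mem_componentsIn hK hu).1, hvT⟩, u, hu,
      hends ▸ Sym2.mem_mk_left u v⟩

lemma edgeBoundary_diff_subset :
    edgeBoundary ends (T \ K) ⊆ (Y \ meetingEdges ends Y K) ∪ meetingEdges ends X K := by
  rintro e ⟨u, v, hends, ⟨huT, huK⟩, hv⟩
  by_cases hvT : v ∈ T
  · have hvK : v ∈ K := by_contra fun hvK => hv ⟨hvT, hvK⟩
    have huS : u ∈ S := by_contra fun huS =>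
      huK (mem_of_mem_componentsIn_of_ends_eq hK hvK ⟨huT, huS⟩ (hends.trans Sym2.eq_swap))
    exact Or.inr ⟨hSX ⟨u, v, hends, huS, (subset_of_mem_componentsIn hK hvK).2⟩, v, hvK,
      hends ▸ Sym2.mem_mk_right u v⟩
  · have hvK : v ∉ K := fun hvK => hvT (subset_of_mem_componentsIn hK hvK).1
    exact Or.inl ⟨hTY ⟨u, v, hends, huT, hvT⟩, notMem_meetingEdges_of_ends_eq hends huK hvK⟩

end Uncrossing

lemma ncard_le_ncard_of_exchange {α : Type*} [Finite α] {X Z A B : Set α} (hA : A ⊆ X)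
    (hXZ : X.ncard ≤ Z.ncard) (hZ : Z ⊆ (X \ A) ∪ B) : A.ncard ≤ B.ncard := by
  have h₁ := Set.ncard_le_ncard hZ
  have h₂ := Set.ncard_union_le (X \ A) B
  have h₃ := Set.ncard_sdiff hA
  have h₄ := Set.ncard_le_ncard hA
  omega

section MinimumCut

variable {s t : V} {X Y : Set E}

lemma IsCut.disjoint (hX : IsCut ends X {s} {t}) : Disjoint (RS ends X {s}) (RS ends X {t}) :=
  Set.disjoint_iff_inter_eq_empty.2 hX

lemma IsCut.target_notMem (hX : IsCut ends X {s} {t}) : t ∉ RS ends X {s} :=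
  fun ht => Set.disjoint_left.1 hX.disjoint ht (mem_RS_self X t)

lemma IsCut.source_notMem (hX : IsCut ends X {s} {t}) : s ∉ RS ends X {t} :=
  Set.disjoint_left.1 hX.disjoint (mem_RS_self X s)

lemma IsMinimumCut.lamCut_eq (hX : IsMinimumCut ends X {s} {t}) : lamCut ends s t = X.ncard := by
  refine le_antisymm (Nat.sInf_le ⟨X, hX.1, rfl⟩) (le_csInf ⟨X.ncard, X, hX.1, rfl⟩ ?_)
  rintro n ⟨Y, hY, rfl⟩
  exact hX.2 Y hY

variable [Fintype E]

lemma IsMinimumCut.edgeBoundary_eq (hX : IsMinimumCut ends X {s} {t}) {U : Set V} (hs : s ∈ U)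
    (ht : t ∉ U) (hUX : edgeBoundary ends U ⊆ X) : edgeBoundary ends U = X :=
  Set.eq_of_subset_of_ncard_le hUX (hX.2 _ (isCut_edgeBoundary hs ht))

lemma IsMinimumCut.edgeBoundary_RS_eq (hX : IsMinimumCut ends X {s} {t}) :
    edgeBoundary ends (RS ends X {s}) = X :=
  hX.edgeBoundary_eq (mem_RS_self X s) hX.1.target_notMem (edgeBoundary_RS_subset X {s})

/-- Both `δ(R_s(X))` and `δ(R_t(X))` are `(s,t)`-cuts inside `X`, hence both equal `X`. -/
lemma IsMinimumCut.exists_ends (hX : IsMinimumCut ends X {s} {t}) {e : E} (he : e ∈ X) :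
    ∃ u v, ends e = s(u, v) ∧ u ∈ RS ends X {s} ∧ v ∈ RS ends X {t} := by
  obtain ⟨u, v, hends, hu, -⟩ : e ∈ edgeBoundary ends (RS ends X {s}) := by
    rwa [hX.edgeBoundary_RS_eq]
  obtain ⟨a, b, hends', -, hb⟩ : e ∈ edgeBoundary ends (RS ends X {t})ᶜ := by
    rwa [hX.edgeBoundary_eq hX.1.source_notMem (by simpa using mem_RS_self X t)
      ((edgeBoundary_compl _).trans_subset (edgeBoundary_RS_subset X {t}))]
  rw [Set.notMem_compl_iff] at hb
  rcases Sym2.eq_iff.1 (hends.symm.trans hends') with ⟨-, rfl⟩ | ⟨rfl, -⟩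
  · exact ⟨u, v, hends, hu, hb⟩
  · exact absurd hb (Set.disjoint_left.1 hX.1.disjoint hu)

lemma IsMinimumCut.eq_of_mem_ends (hX : IsMinimumCut ends X {s} {t}) {e : E} (he : e ∈ X)
    {v w : V} (hv : v ∈ ends e) (hw : w ∈ ends e) (hvS : v ∉ RS ends X {s})
    (hwS : w ∉ RS ends X {s}) : v = w := by
  obtain ⟨a, b, hends, ha, -⟩ := hX.exists_ends he
  rw [hends, Sym2.mem_iff] at hv hw
  rcases hv with rfl | rfl <;> rcases hw with rfl | rfl <;> first | rfl | contradiction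

variable (hconn : ∀ u v : V, Reach ends ∅ u v)
include hconn

lemma IsMinimumCut.nonempty (hX : IsMinimumCut ends X {s} {t}) : X.Nonempty :=
  hX.edgeBoundary_RS_eq ▸ edgeBoundary_nonempty hconn (mem_RS_self X s) hX.1.target_notMem

lemma IsMinimumCut.one_le_lamCut (hX : IsMinimumCut ends X {s} {t}) : 1 ≤ lamCut ends s t :=
  hX.lamCut_eq ▸ (hX.nonempty hconn).ncard_pos

lemma IsMinimumCut.mem_RS_or_mem_RS (hX : IsMinimumCut ends X {s} {t}) (w : V) :
    w ∈ RS ends X {s} ∨ w ∈ RS ends X {t} := by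
  induction hconn s w with
  | refl => exact Or.inl (mem_RS_self X s)
  | tail _ hcb ih =>
    obtain ⟨f, -, hf⟩ := hcb
    by_cases hfX : f ∈ X
    · obtain ⟨u, v, hends, hu, hv⟩ := hX.exists_ends hfX
      rcases Sym2.eq_iff.1 (hf.symm.trans hends) with ⟨-, rfl⟩ | ⟨-, rfl⟩
      · exact Or.inr hv
      · exact Or.inl hu
    · exact ih.imp (mem_RS_of_mem_of_ends_eq · hfX hf) (mem_RS_of_mem_of_ends_eq · hfX hf)

lemma IsMinimumCut.compl_RS_eq (hX : IsMinimumCut ends X {s} {t}) :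
    Set.univ \ RS ends X {s} = RS ends X {t} := by
  ext w
  exact ⟨fun hw => (hX.mem_RS_or_mem_RS hconn w).resolve_left hw.2,
    fun hw => ⟨trivial, fun hws => Set.disjoint_left.1 hX.1.disjoint hws hw⟩⟩

end MinimumCut

section MiddleBlock

variable [Fintype E] {s t : V} {X Y : Set E} {K : Set V}

theorem IsMinimumCut.ncard_meetingEdges_eq (hX : IsMinimumCut ends X {s} {t})
    (hY : IsMinimumCut ends Y {s} {t})
    (hK : K ∈ componentsIn ends (RS ends Y {s} \ RS ends X {s})) :
    (meetingEdges ends X K).ncard = (meetingEdges ends Y K).ncard := by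
  have hSX : edgeBoundary ends (RS ends X {s}) ⊆ X := edgeBoundary_RS_subset X {s}
  have hTY : edgeBoundary ends (RS ends Y {s}) ⊆ Y := edgeBoundary_RS_subset Y {s}
  have hsK : s ∉ K := fun hs => (subset_of_mem_componentsIn hK hs).2 (mem_RS_self X s)
  have htK : t ∉ K := fun ht => hY.1.target_notMem (subset_of_mem_componentsIn hK ht).1
  apply le_antisymm
  · refine ncard_le_ncard_of_exchange (fun _ he => he.1) (hX.2 _ ?_)
      (edgeBoundary_union_subset hSX hTY hK)
    exact isCut_edgeBoundary (Or.inl (mem_RS_self X s)) (not_or.2 ⟨hX.1.target_notMem, htK⟩)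
  · refine ncard_le_ncard_of_exchange (fun _ he => he.1) (hY.2 _ ?_)
      (edgeBoundary_diff_subset hSX hTY hK)
    exact isCut_edgeBoundary ⟨mem_RS_self Y s, hsK⟩ fun ht => hY.1.target_notMem ht.1

variable (hconn : ∀ u v : V, Reach ends ∅ u v)
include hconn

lemma IsMinimumCut.meetingEdges_nonempty (hX : IsMinimumCut ends X {s} {t})
    (hY : IsMinimumCut ends Y {s} {t})
    (hK : K ∈ componentsIn ends (RS ends Y {s} \ RS ends X {s})) :
    (meetingEdges ends X K).Nonempty := by
  obtain ⟨k, hk⟩ := nonempty_of_mem_componentsIn hK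
  have hsK : s ∉ K := fun hs => (subset_of_mem_componentsIn hK hs).2 (mem_RS_self X s)
  obtain ⟨e, he⟩ := edgeBoundary_nonempty hconn hk hsK
  rcases edgeBoundary_subset_meetingEdges_union (edgeBoundary_RS_subset X {s})
    (edgeBoundary_RS_subset Y {s}) hK he with heX | heY
  · exact ⟨e, heX⟩
  · refine Set.nonempty_of_ncard_ne_zero ?_
    rw [hX.ncard_meetingEdges_eq hY hK]
    exact Set.ncard_ne_zero_of_mem heY

theorem IsMinimumCut.ncard_componentsIn_le (hX : IsMinimumCut ends X {s} {t})
    (hY : IsMinimumCut ends Y {s} {t}) :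
    (componentsIn ends (RS ends Y {s} \ RS ends X {s})).ncard ≤ X.ncard := by
  have : Nonempty E := (hX.nonempty hconn).to_subtype.map Subtype.val
  choose! f hf using fun K (hK : K ∈ componentsIn ends (RS ends Y {s} \ RS ends X {s})) =>
    hX.meetingEdges_nonempty hconn hY hK
  refine Set.ncard_le_ncard_of_injOn f (fun K hK => (hf K hK).1) fun K hK K' hK' hKK' => ?_
  obtain ⟨-, v, hvK, hv⟩ := hf K hK
  obtain ⟨heX, v', hv'K', hv'⟩ := hf K' hK'
  rw [hKK'] at hv
  have hvv' : v = v' := hX.eq_of_mem_ends heX hv hv' (subset_of_mem_componentsIn hK hvK).2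
    (subset_of_mem_componentsIn hK' hv'K').2
  exact eq_of_mem_componentsIn hK hK' hvK (hvv' ▸ hv'K')

end MiddleBlock

section Blocks

variable {s t : V} {p i : ℕ} {C : ℕ → Set E}

lemma CanonSeq.isMinimumCut (hC : CanonSeq ends s t p C) (hi : i ≤ p) :
    IsMinimumCut ends (C i) {s} {t} := by
  rcases Nat.eq_zero_or_pos i with rfl | hpos
  · exact hC.1.1
  · exact (hC.2.1 i hpos hi).1

lemma blockOf_zero : blockOf ends s p C 0 = RS ends (C 0) {s} := if_pos rfl

lemma blockOf_of_pos_of_le (h₁ : 0 < i) (h₂ : i ≤ p) :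
    blockOf ends s p C i = RS ends (C i) {s} \ RS ends (C (i - 1)) {s} := by
  simp [blockOf, h₁.ne', h₂]

lemma blockOf_succ_self : blockOf ends s p C (p + 1) = Set.univ \ RS ends (C p) {s} := by
  simp [blockOf]

variable [Fintype E] (hconn : ∀ u v : V, Reach ends ∅ u v)
include hconn

lemma CanonSeq.blockOf_succ_self (hC : CanonSeq ends s t p C) :
    blockOf ends s p C (p + 1) = RS ends (C p) {t} :=
  FlowAug.blockOf_succ_self.trans ((hC.isMinimumCut le_rfl).compl_RS_eq hconn)

lemma CanonSeq.ncard_componentsIn_blockOf_le (hC : CanonSeq ends s t p C) (hi : i ≤ p + 1) :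
    (componentsIn ends (blockOf ends s p C i)).ncard ≤ lamCut ends s t := by
  have hlam := (hC.isMinimumCut (Nat.zero_le p)).one_le_lamCut hconn
  rcases Nat.eq_zero_or_pos i with rfl | hpos
  · rw [blockOf_zero]
    exact (ncard_componentsIn_le_one (connIn_RS _ s)).trans hlam
  rcases Nat.lt_or_ge p i with hpi | hip
  · obtain rfl : i = p + 1 := by omega
    rw [hC.blockOf_succ_self hconn]
    exact (ncard_componentsIn_le_one (connIn_RS _ t)).trans hlam
  · have hprev := hC.isMinimumCut ((i.sub_le 1).trans hip)
    rw [blockOf_of_pos_of_le hpos hip, hprev.lamCut_eq]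
    exact hprev.ncard_componentsIn_le hconn (hC.isMinimumCut hip)

end Blocks

theorem blocks_components_structure_general {V E : Type} [Fintype E]
    (ends : E → Sym2 V)
    (hconn : ∀ u v : V, Reach ends (∅ : Set E) u v)
    (s t : V)
    (p : ℕ) (C : ℕ → Set E) (hC : CanonSeq ends s t p C) :
    (∀ i : ℕ, i ≤ p + 1 →
      (componentsIn ends (blockOf ends s p C i)).ncard ≤ lamCut ends s t) ∧
    (∀ i : ℕ, 1 ≤ i → i ≤ p →
      ∀ K ∈ componentsIn ends (blockOf ends s p C i),
        ∃ c : ℕ, 1 ≤ c ∧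
          {e | e ∈ C (i - 1) ∧ ∃ v ∈ K, v ∈ ends e}.ncard = c ∧
          {e | e ∈ C i ∧ ∃ v ∈ K, v ∈ ends e}.ncard = c) ∧
    ConnIn ends (blockOf ends s p C 0) ∧
    ConnIn ends (blockOf ends s p C (p + 1)) ∧
    (∀ e ∈ C 0, ∃ v ∈ blockOf ends s p C 0, v ∈ ends e) ∧
    (∀ e ∈ C p, ∃ v ∈ blockOf ends s p C (p + 1), v ∈ ends e) := by
  have hmin : ∀ {i}, i ≤ p → IsMinimumCut ends (C i) {s} {t} := hC.isMinimumCut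
  refine ⟨fun i hi => hC.ncard_componentsIn_blockOf_le hconn hi, fun i h₁ h₂ K hK => ?_,
    blockOf_zero ▸ connIn_RS _ s, hC.blockOf_succ_self hconn ▸ connIn_RS _ t,
    fun e he => ?_, fun e he => ?_⟩
  · rw [blockOf_of_pos_of_le h₁ h₂] at hK
    have hprev := hmin ((i.sub_le 1).trans h₂)
    exact ⟨_, (hprev.meetingEdges_nonempty hconn (hmin h₂) hK).ncard_pos, rfl,
      (hprev.ncard_meetingEdges_eq (hmin h₂) hK).symm⟩
  · obtain ⟨u, v, hends, hu, -⟩ := (hmin (Nat.zero_le p)).exists_ends he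
    exact ⟨u, blockOf_zero ▸ hu, hends ▸ Sym2.mem_mk_left u v⟩
  · obtain ⟨u, v, hends, -, hv⟩ := (hmin le_rfl).exists_ends he
    exact ⟨v, hC.blockOf_succ_self hconn ▸ hv, hends ▸ Sym2.mem_mk_right u v⟩

/-- With `C 0, …, C p` the canonical sequence of minimum `(s,t)`-cuts
of a connected multigraph and `V_0, …, V_{p+1}` the blocks: each block induces at most
`λ = λ_G(s,t)` connected components; for `1 ≤ i ≤ p` each component of `G[V_i]` is
incident with some number `c ≥ 1` of edges of `C (i-1)` and exactly `c` edges of `C i`;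
`V_0` and `V_{p+1}` are connected; `V_0` is incident with all `λ` edges of `C 0` and
`V_{p+1}` with all `λ` edges of `C p`. -/
theorem blocks_components_structure {V E : Type} [Fintype V] [Fintype E]
    (ends : E → Sym2 V) (hloop : ∀ e, ¬ (ends e).IsDiag)
    (hconn : ∀ u v : V, Reach ends (∅ : Set E) u v)
    (s t : V) (hst : s ≠ t)
    (p : ℕ) (C : ℕ → Set E) (hC : CanonSeq ends s t p C) :
    (∀ i : ℕ, i ≤ p + 1 →
      (componentsIn ends (blockOf ends s p C i)).ncard ≤ lamCut ends s t) ∧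
    (∀ i : ℕ, 1 ≤ i → i ≤ p →
      ∀ K ∈ componentsIn ends (blockOf ends s p C i),
        ∃ c : ℕ, 1 ≤ c ∧
          {e | e ∈ C (i - 1) ∧ ∃ v ∈ K, v ∈ ends e}.ncard = c ∧
          {e | e ∈ C i ∧ ∃ v ∈ K, v ∈ ends e}.ncard = c) ∧
    ConnIn ends (blockOf ends s p C 0) ∧
    ConnIn ends (blockOf ends s p C (p + 1)) ∧
    (∀ e ∈ C 0, ∃ v ∈ blockOf ends s p C 0, v ∈ ends e) ∧
    (∀ e ∈ C p, ∃ v ∈ blockOf ends s p C (p + 1), v ∈ ends e) :=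
  blocks_components_structure_general ends hconn s t p C hC

end FlowAug
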